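/- arXiv:2402.14799 — 3 statements merged into one kernel-verified Lean document; each statement's English description precedes it below -/
import Mathlib

section
/- Modulo the ideal I generated by Γ₃, St₃, T₄ (under all variable substitutions), commutators of variables commute with arbitrary elements: for all f₀, f₁, f₂ ∈ F⟨X⟩ and indices i, j: f₁ [x_i,x_j] f₀ f₂ ≡ f₁ f₀ [x_i,x_j] f₂ (mod I). -/
open FreeAlgebra

/-- Γ₃(x_i, x_j, x_k) = [[x_i, x_j], x_k] in the free algebra. -/
noncomputable def Gamma3 (F : Type) [Field F] (i j k : ℕ) : FreeAlgebra F ℕ :=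
  (ι F i * ι F j - ι F j * ι F i) * ι F k - ι F k * (ι F i * ι F j - ι F j * ι F i)

/-- St₃(x_i, x_j, x_k) = x_i[x_j,x_k] - x_j[x_i,x_k] + x_k[x_i,x_j]. -/
noncomputable def St3 (F : Type) [Field F] (i j k : ℕ) : FreeAlgebra F ℕ :=
  ι F i * (ι F j * ι F k - ι F k * ι F j) - ι F j * (ι F i * ι F k - ι F k * ι F i) +
    ι F k * (ι F i * ι F j - ι F j * ι F i)

/-- T₄(x_i, x_j, x_k, x_l) = [x_i,x_j][x_k,x_l] - [x_i,x_k][x_j,x_l] + [x_j,x_k][x_i,x_l]. -/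
noncomputable def T4 (F : Type) [Field F] (i j k l : ℕ) : FreeAlgebra F ℕ :=
  (ι F i * ι F j - ι F j * ι F i) * (ι F k * ι F l - ι F l * ι F k) -
    (ι F i * ι F k - ι F k * ι F i) * (ι F j * ι F l - ι F l * ι F j) +
    (ι F j * ι F k - ι F k * ι F j) * (ι F i * ι F l - ι F l * ι F i)

/-- The generators of the ideal `I`: all substitutions of variables into Γ₃, St₃, T₄. -/
def weakGen (F : Type) [Field F] : Set (FreeAlgebra F ℕ) :=
  {g | (∃ i j k, g = Gamma3 F i j k) ∨ (∃ i j k, g = St3 F i j k) ∨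
      (∃ i j k l, g = T4 F i j k l)}

/-- The two-sided ideal `I` of the free algebra generated by all substitutions of
variables into Γ₃, St₃, T₄, realized as the span of `a * g * b`. -/
noncomputable def weakIdeal (F : Type) [Field F] : Submodule F (FreeAlgebra F ℕ) :=
  Submodule.span F {x | ∃ (a : FreeAlgebra F ℕ) (g : FreeAlgebra F ℕ) (b : FreeAlgebra F ℕ),
    g ∈ weakGen F ∧ x = a * g * b}


lemma weakIdeal_mul_left (F : Type) [Field F] (r x : FreeAlgebra F ℕ)
    (hx : x ∈ weakIdeal F) : r * x ∈ weakIdeal F := by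
  induction hx using Submodule.span_induction with
  | mem y hy =>
    obtain ⟨a, g, b, hg, rfl⟩ := hy
    exact Submodule.subset_span ⟨r * a, g, b, hg, by noncomm_ring⟩
  | zero => simpa using (weakIdeal F).zero_mem
  | add y z _ _ hy hz => simpa [mul_add] using (weakIdeal F).add_mem hy hz
  | smul c y _ hy => simpa [mul_smul_comm] using (weakIdeal F).smul_mem c hy

lemma weakIdeal_mul_right (F : Type) [Field F] (x r : FreeAlgebra F ℕ)
    (hx : x ∈ weakIdeal F) : x * r ∈ weakIdeal F := by
  induction hx using Submodule.span_induction with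
  | mem y hy =>
    obtain ⟨a, g, b, hg, rfl⟩ := hy
    exact Submodule.subset_span ⟨a, g, b * r, hg, by noncomm_ring⟩
  | zero => simpa using (weakIdeal F).zero_mem
  | add y z _ _ hy hz => simpa [add_mul] using (weakIdeal F).add_mem hy hz
  | smul c y _ hy => simpa [smul_mul_assoc] using (weakIdeal F).smul_mem c hy

lemma bracket_comm_mod (F : Type) [Field F] (i j : ℕ) (f : FreeAlgebra F ℕ) :
    (ι F i * ι F j - ι F j * ι F i) * f - f * (ι F i * ι F j - ι F j * ι F i) ∈
      weakIdeal F := by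
  set c : FreeAlgebra F ℕ := ι F i * ι F j - ι F j * ι F i with hc
  induction f using FreeAlgebra.induction with
  | grade1 k =>
    have : c * ι F k - ι F k * c = (1 : FreeAlgebra F ℕ) * Gamma3 F i j k * 1 := by
      simp [Gamma3, hc]
    rw [this]
    exact Submodule.subset_span ⟨1, Gamma3 F i j k, 1, Or.inl ⟨i, j, k, rfl⟩, rfl⟩
  | grade0 r => simpa [Algebra.commutes] using (weakIdeal F).zero_mem
  | add a b ha hb => simpa [mul_add, add_mul, sub_add_sub_comm] using (weakIdeal F).add_mem ha hb
  | mul a b ha hb =>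
    have h1 := weakIdeal_mul_right F _ b ha
    have h2 := weakIdeal_mul_left F a _ hb
    have := (weakIdeal F).add_mem h1 h2
    have heq : (c * a - a * c) * b + a * (c * b - b * c) = c * (a * b) - a * b * c := by
      noncomm_ring
    rwa [heq] at this

/-- Modulo I, commutators of variables commute with arbitrary elements:
f₁ [x_i,x_j] f₀ f₂ ≡ f₁ f₀ [x_i,x_j] f₂. -/
theorem bracket_central_mod_weakIdeal (F : Type) [Field F]
    (f₀ f₁ f₂ : FreeAlgebra F ℕ) (i j : ℕ) :
    f₁ * (ι F i * ι F j - ι F j * ι F i) * f₀ * f₂ -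
      f₁ * f₀ * (ι F i * ι F j - ι F j * ι F i) * f₂ ∈ weakIdeal F := by
  have h := bracket_comm_mod F i j f₀
  have h2 := weakIdeal_mul_right F _ f₂ (weakIdeal_mul_left F f₁ _ h)
  have heq : f₁ * ((ι F i * ι F j - ι F j * ι F i) * f₀ - f₀ * (ι F i * ι F j - ι F j * ι F i)) * f₂ =
      f₁ * (ι F i * ι F j - ι F j * ι F i) * f₀ * f₂ -
        f₁ * f₀ * (ι F i * ι F j - ι F j * ι F i) * f₂ := by noncomm_ring
  rwa [heq] at h2
end

section
/- The Weyl algebra A₁ over F is a simple ring if and only if char F = 0. -/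
/-- The defining relation of the Weyl algebra: `y * x = x * y + 1`. -/
inductive WeylRel (F : Type) [Field F] :
    FreeAlgebra F (Fin 2) → FreeAlgebra F (Fin 2) → Prop
  | rel : WeylRel F (FreeAlgebra.ι F 1 * FreeAlgebra.ι F 0)
      (FreeAlgebra.ι F 0 * FreeAlgebra.ι F 1 + 1)

/-- The Weyl algebra A₁ over `F`. -/
abbrev Weyl (F : Type) [Field F] := RingQuot (WeylRel F)

/-- The generator `x` of the Weyl algebra. -/
noncomputable def Wx (F : Type) [Field F] : Weyl F :=
  RingQuot.mkAlgHom F (WeylRel F) (FreeAlgebra.ι F 0)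

/-- The generator `y` of the Weyl algebra. -/
noncomputable def Wy (F : Type) [Field F] : Weyl F :=
  RingQuot.mkAlgHom F (WeylRel F) (FreeAlgebra.ι F 1)

/-- `V = F`-span of `{x, y}` inside the Weyl algebra. -/
noncomputable def WV (F : Type) [Field F] : Submodule F (Weyl F) :=
  Submodule.span F {Wx F, Wy F}
variable (F : Type) [Field F]

open Polynomial in
/-- multiplication by X on F[X] -/
noncomputable def WMx : Module.End F (Polynomial F) :=
  LinearMap.mulLeft F Polynomial.X

open Polynomial in
noncomputable def WMd : Module.End F (Polynomial F) :=
  Polynomial.derivative (R := F)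

lemma weyl_rel_poly : WMd F * WMx F = WMx F * WMd F + 1 := by
  refine LinearMap.ext fun f => ?_
  simp only [Module.End.mul_apply, LinearMap.add_apply, Module.End.one_apply, WMd, WMx,
    LinearMap.mulLeft_apply, Polynomial.derivative_mul, Polynomial.derivative_X]
  ring

/-- the representation of the Weyl algebra on F[X] -/
noncomputable def Wrho : Weyl F →ₐ[F] Module.End F (Polynomial F) :=
  RingQuot.liftAlgHom F ⟨FreeAlgebra.lift F ![WMx F, WMd F], by
    rintro a b ⟨⟩
    simp [weyl_rel_poly]⟩

lemma Wrho_x : Wrho F (Wx F) = WMx F := by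
  rw [Wx, Wrho, RingQuot.liftAlgHom_mkAlgHom_apply]
  simp

lemma Wrho_y : Wrho F (Wy F) = WMd F := by
  rw [Wy, Wrho, RingQuot.liftAlgHom_mkAlgHom_apply]
  simp

lemma weyl_algebraMap_injective : Function.Injective (algebraMap F (Weyl F)) := by
  intro a b h
  have := congrArg (Wrho F) h
  rw [AlgHom.commutes, AlgHom.commutes] at this
  have := congrArg (fun (g : Module.End F (Polynomial F)) => Polynomial.coeff (g 1) 0) this
  simpa [Module.algebraMap_end_apply] using this

lemma weyl_x_pow_ne_zero (n : ℕ) : (Wx F)^n ≠ 0 := by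
  intro h
  have := congrArg (Wrho F) h
  rw [map_pow, Wrho_x, map_zero] at this
  have := congrArg (fun (g : Module.End F (Polynomial F)) => g 1) this
  have hXn : ∀ k, (WMx F ^ k) (1 : Polynomial F) = Polynomial.X ^ k := by
    intro k
    induction k with
    | zero => simp
    | succ k ih =>
      rw [pow_succ', Module.End.mul_apply, ih, WMx, LinearMap.mulLeft_apply, ← pow_succ']
  simp only [hXn, LinearMap.zero_apply] at this
  exact pow_ne_zero n Polynomial.X_ne_zero this

/-! ### Characteristic p : a finite-dimensional-ish quotient representation -/

noncomputable def WJ (p : ℕ) : Submodule F (Polynomial F) :=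
  Submodule.span F (Set.range fun n : ℕ => Polynomial.X ^ (n + p))

lemma WJ_mul_X_mem (p : ℕ) : WJ F p ≤ (WJ F p).comap (WMx F) := by
  rw [WJ, Submodule.span_le]
  rintro _ ⟨n, rfl⟩
  simp only [Set.mem_setOf_eq, SetLike.mem_coe, Submodule.mem_comap, WMx,
    LinearMap.mulLeft_apply]
  rw [← pow_succ']
  have h : n + p + 1 = (n + 1) + p := by ring
  rw [h]
  exact Submodule.subset_span ⟨n + 1, rfl⟩

lemma WJ_deriv_mem (p : ℕ) (hp0 : (p : F) = 0) : WJ F p ≤ (WJ F p).comap (WMd F) := by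
  rw [WJ, Submodule.span_le]
  rintro _ ⟨n, rfl⟩
  simp only [Set.mem_setOf_eq, SetLike.mem_coe, Submodule.mem_comap, WMd]
  rw [Polynomial.derivative_X_pow]
  cases n with
  | zero => simp [hp0]
  | succ n =>
    have h : (Polynomial.C ((n + 1 + p : ℕ) : F)) * Polynomial.X ^ (n + 1 + p - 1) =
        ((n + 1 + p : ℕ) : F) • Polynomial.X ^ (n + p) := by
      rw [Polynomial.smul_eq_C_mul]
      congr 2
      omega
    rw [h]
    exact Submodule.smul_mem _ _ (Submodule.subset_span ⟨n, rfl⟩)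

noncomputable def WXbar (p : ℕ) : Module.End F (Polynomial F ⧸ WJ F p) :=
  Submodule.mapQ _ _ (WMx F) (WJ_mul_X_mem F p)

noncomputable def WDbar (p : ℕ) (hp0 : (p : F) = 0) :
    Module.End F (Polynomial F ⧸ WJ F p) :=
  Submodule.mapQ _ _ (WMd F) (WJ_deriv_mem F p hp0)

lemma weyl_rel_bar (p : ℕ) (hp0 : (p : F) = 0) :
    WDbar F p hp0 * WXbar F p = WXbar F p * WDbar F p hp0 + 1 := by
  apply Submodule.linearMap_qext
  refine LinearMap.ext fun f => ?_
  simp only [LinearMap.comp_apply, Submodule.mkQ_apply, Module.End.mul_apply, WXbar, WDbar,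
    Submodule.mapQ_apply, LinearMap.add_apply, Module.End.one_apply]
  have h := congrArg (fun g : Module.End F (Polynomial F) => g f) (weyl_rel_poly F)
  simp only [Module.End.mul_apply, LinearMap.add_apply, Module.End.one_apply] at h
  rw [h, Submodule.Quotient.mk_add]

noncomputable def Wrhobar (p : ℕ) (hp0 : (p : F) = 0) :
    Weyl F →ₐ[F] Module.End F (Polynomial F ⧸ WJ F p) :=
  RingQuot.liftAlgHom F ⟨FreeAlgebra.lift F ![WXbar F p, WDbar F p hp0], by
    rintro a b ⟨⟩
    simp [weyl_rel_bar F p hp0]⟩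

lemma Wrhobar_x (p : ℕ) (hp0 : (p : F) = 0) : Wrhobar F p hp0 (Wx F) = WXbar F p := by
  rw [Wx, Wrhobar, RingQuot.liftAlgHom_mkAlgHom_apply]
  simp

lemma WJ_X_pow_mul_mem (p : ℕ) (f : Polynomial F) : Polynomial.X ^ p * f ∈ WJ F p := by
  induction f using Polynomial.induction_on' with
  | add a b ha hb => rw [mul_add]; exact Submodule.add_mem _ ha hb
  | monomial n a =>
    have h : Polynomial.X ^ p * Polynomial.monomial n a = a • Polynomial.X ^ (n + p) := by
      rw [Polynomial.smul_eq_C_mul, ← Polynomial.C_mul_X_pow_eq_monomial, pow_add]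
      ring
    rw [h]
    exact Submodule.smul_mem _ _ (Submodule.subset_span ⟨n, rfl⟩)

lemma WXbar_pow_p (p : ℕ) : WXbar F p ^ p = 0 := by
  have key : ∀ (k : ℕ) (f : Polynomial F),
      (WXbar F p ^ k) ((WJ F p).mkQ f) = (WJ F p).mkQ (Polynomial.X ^ k * f) := by
    intro k
    induction k with
    | zero => intro f; simp
    | succ k ih =>
      intro f
      have hXbar : WXbar F p ((WJ F p).mkQ f) = (WJ F p).mkQ (Polynomial.X * f) := by
        rw [Submodule.mkQ_apply, WXbar, Submodule.mapQ_apply]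
        rfl
      rw [pow_succ, Module.End.mul_apply, hXbar, ih]
      congr 1
      ring
  apply Submodule.linearMap_qext
  refine LinearMap.ext fun f => ?_
  simp only [LinearMap.comp_apply, Submodule.mkQ_apply, LinearMap.zero_comp,
    LinearMap.zero_apply]
  rw [← Submodule.mkQ_apply, key p f, Submodule.mkQ_apply, Submodule.Quotient.mk_eq_zero]
  exact WJ_X_pow_mul_mem F p f

lemma WJ_quot_nontrivial (p : ℕ) (hp : 0 < p) : Nontrivial (Polynomial F ⧸ WJ F p) := by
  refine ⟨(WJ F p).mkQ 1, 0, ?_⟩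
  rw [Ne, Submodule.mkQ_apply, Submodule.Quotient.mk_eq_zero]
  intro h1
  have hle : WJ F p ≤ LinearMap.ker (Polynomial.lcoeff F 0) := by
    rw [WJ, Submodule.span_le]
    rintro _ ⟨n, rfl⟩
    simp only [SetLike.mem_coe, LinearMap.mem_ker, Polynomial.lcoeff_apply,
      Polynomial.coeff_X_pow]
    rw [if_neg (by omega)]
  have := hle h1
  simp [Polynomial.lcoeff_apply] at this

theorem weyl_charZero_of_simple (h : IsSimpleRing (Weyl F)) : CharZero F := by
  by_contra hcz
  obtain hp | hp0 := CharP.char_is_prime_or_zero F (ringChar F)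
  · set p := ringChar F
    haveI := ringChar.charP F
    have hp0 : (p : F) = 0 := CharP.cast_eq_zero F p
    have hppos : 0 < p := hp.pos
    haveI := WJ_quot_nontrivial F p hppos
    have hinj : Function.Injective (Wrhobar F p hp0) :=
      RingHom.injective (Wrhobar F p hp0).toRingHom
    have : (Wx F) ^ p = 0 := by
      apply hinj
      rw [map_pow, Wrhobar_x, WXbar_pow_p, map_zero]
    exact weyl_x_pow_ne_zero F p this
  · haveI : CharP F 0 := hp0 ▸ ringChar.charP F
    exact hcz (CharP.charP_to_charZero F)

/-! ### The defining relation inside the Weyl algebra, monomials, commutators -/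

lemma weyl_rel : Wy F * Wx F = Wx F * Wy F + 1 := by
  have h := RingQuot.mkAlgHom_rel F (WeylRel.rel (F := F))
  simpa [map_mul, map_add, map_one, Wx, Wy] using h

noncomputable def Wm (i j : ℕ) : Weyl F := Wx F ^ i * Wy F ^ j

lemma commYX (j : ℕ) :
    Wy F ^ (j + 1) * Wx F = Wx F * Wy F ^ (j + 1) + (j + 1) • Wy F ^ j := by
  induction j with
  | zero => simpa using weyl_rel F
  | succ j ih =>
    calc Wy F ^ (j + 2) * Wx F = Wy F * (Wy F ^ (j + 1) * Wx F) := by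
          rw [pow_succ', mul_assoc]
      _ = Wy F * (Wx F * Wy F ^ (j + 1) + (j + 1) • Wy F ^ j) := by rw [ih]
      _ = (Wy F * Wx F) * Wy F ^ (j + 1) + (j + 1) • Wy F ^ (j + 1) := by
          rw [mul_add, mul_smul_comm, ← mul_assoc, ← pow_succ']
      _ = (Wx F * Wy F + 1) * Wy F ^ (j + 1) + (j + 1) • Wy F ^ (j + 1) := by
          rw [weyl_rel]
      _ = Wx F * Wy F ^ (j + 2) + (j + 2) • Wy F ^ (j + 1) := by
          rw [add_mul, one_mul, mul_assoc, ← pow_succ']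
          rw [succ_nsmul (Wy F ^ (j+1)) (j+1)]
          abel

lemma commYXpow (i : ℕ) :
    Wy F * Wx F ^ (i + 1) = Wx F ^ (i + 1) * Wy F + (i + 1) • Wx F ^ i := by
  induction i with
  | zero => simpa using weyl_rel F
  | succ i ih =>
    calc Wy F * Wx F ^ (i + 2) = (Wy F * Wx F ^ (i + 1)) * Wx F := by
          rw [pow_succ, ← mul_assoc]
      _ = (Wx F ^ (i + 1) * Wy F + (i + 1) • Wx F ^ i) * Wx F := by rw [ih]
      _ = Wx F ^ (i + 1) * (Wy F * Wx F) + (i + 1) • Wx F ^ (i + 1) := by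
          rw [add_mul, smul_mul_assoc, mul_assoc, ← pow_succ]
      _ = Wx F ^ (i + 1) * (Wx F * Wy F + 1) + (i + 1) • Wx F ^ (i + 1) := by
          rw [weyl_rel]
      _ = Wx F ^ (i + 2) * Wy F + (i + 2) • Wx F ^ (i + 1) := by
          rw [mul_add, mul_one, ← mul_assoc, ← pow_succ]
          rw [succ_nsmul (Wx F ^ (i+1)) (i+1)]
          abel

noncomputable def WadX : Weyl F →ₗ[F] Weyl F :=
  LinearMap.mulRight F (Wx F) - LinearMap.mulLeft F (Wx F)

noncomputable def WadY : Weyl F →ₗ[F] Weyl F :=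
  LinearMap.mulLeft F (Wy F) - LinearMap.mulRight F (Wy F)

lemma WadX_m (i j : ℕ) : WadX F (Wm F i j) = j • Wm F i (j - 1) := by
  cases j with
  | zero =>
    simp [WadX, Wm, LinearMap.sub_apply, LinearMap.mulRight_apply, LinearMap.mulLeft_apply,
      mul_assoc, ← pow_succ, ← pow_succ']
  | succ j =>
    simp only [WadX, LinearMap.sub_apply, LinearMap.mulRight_apply, LinearMap.mulLeft_apply, Wm]
    have h1 : Wx F ^ i * Wy F ^ (j + 1) * Wx F
        = Wx F ^ i * (Wx F * Wy F ^ (j + 1)) + (j + 1) • (Wx F ^ i * Wy F ^ j) := by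
      rw [mul_assoc, commYX, mul_add, mul_smul_comm]
    rw [h1, ← mul_assoc]
    have h2 : Wx F ^ i * Wx F = Wx F * Wx F ^ i := by
      rw [← pow_succ, ← pow_succ']
    rw [h2, mul_assoc]
    simp only [Nat.add_sub_cancel]
    abel
lemma WadY_m (i j : ℕ) : WadY F (Wm F i j) = i • Wm F (i - 1) j := by
  cases i with
  | zero =>
    simp [WadY, Wm, LinearMap.sub_apply, LinearMap.mulRight_apply, LinearMap.mulLeft_apply,
      mul_assoc, ← pow_succ, ← pow_succ']
  | succ i =>
    simp only [WadY, LinearMap.sub_apply, LinearMap.mulRight_apply, LinearMap.mulLeft_apply, Wm]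
    rw [← mul_assoc, commYXpow, add_mul, smul_mul_assoc]
    have h2 : Wx F ^ (i + 1) * Wy F * Wy F ^ j = Wx F ^ (i + 1) * Wy F ^ j * Wy F := by
      rw [mul_assoc, mul_assoc, ← pow_succ, ← pow_succ']
    rw [h2]
    simp only [Nat.add_sub_cancel]
    abel

lemma WadX_pow_m (n i j : ℕ) :
    (WadX F ^ n) (Wm F i j) = j.descFactorial n • Wm F i (j - n) := by
  induction n with
  | zero => simp
  | succ n ih =>
    rw [pow_succ', Module.End.mul_apply, ih, map_nsmul, WadX_m, smul_smul,
      Nat.descFactorial_succ, Nat.mul_comm]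
    have h : j - n - 1 = j - (n + 1) := by omega
    rw [h]

lemma WadY_pow_m (n i j : ℕ) :
    (WadY F ^ n) (Wm F i j) = i.descFactorial n • Wm F (i - n) j := by
  induction n with
  | zero => simp
  | succ n ih =>
    rw [pow_succ', Module.End.mul_apply, ih, map_nsmul, WadY_m, smul_smul,
      Nat.descFactorial_succ, Nat.mul_comm]
    have h : i - n - 1 = i - (n + 1) := by omega
    rw [h]

/-! ### Spanning: monomials span the Weyl algebra -/

noncomputable def WS : Submodule F (Weyl F) :=
  Submodule.span F (Set.range fun p : ℕ × ℕ => Wm F p.1 p.2)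

lemma Wm_mem_WS (i j : ℕ) : Wm F i j ∈ WS F := Submodule.subset_span ⟨(i, j), rfl⟩

lemma WS_mul_X {s : Weyl F} (hs : s ∈ WS F) : s * Wx F ∈ WS F := by
  induction hs using Submodule.span_induction with
  | mem a ha =>
    obtain ⟨⟨i, j⟩, rfl⟩ := ha
    cases j with
    | zero =>
      have h : Wm F i 0 * Wx F = Wm F (i + 1) 0 := by
        simp [Wm, pow_succ]
      rw [h]; exact Wm_mem_WS F _ _
    | succ j =>
      have h : Wm F i (j + 1) * Wx F = Wm F (i + 1) (j + 1) + (j + 1) • Wm F i j := by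
        simp only [Wm]
        rw [mul_assoc, commYX, mul_add, mul_smul_comm, ← mul_assoc, ← pow_succ]
      rw [h]
      exact add_mem (Wm_mem_WS F _ _) (Submodule.smul_mem _ _ (Wm_mem_WS F _ _))
  | zero => simp
  | add x y hx hy ihx ihy => rw [add_mul]; exact add_mem ihx ihy
  | smul r x hx ih => rw [smul_mul_assoc]; exact Submodule.smul_mem _ _ ih

lemma WS_mul_Y {s : Weyl F} (hs : s ∈ WS F) : s * Wy F ∈ WS F := by
  induction hs using Submodule.span_induction with
  | mem a ha =>
    obtain ⟨⟨i, j⟩, rfl⟩ := ha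
    have h : Wm F i j * Wy F = Wm F i (j + 1) := by
      simp only [Wm]
      rw [mul_assoc, ← pow_succ]
    rw [h]; exact Wm_mem_WS F _ _
  | zero => simp
  | add x y hx hy ihx ihy => rw [add_mul]; exact add_mem ihx ihy
  | smul r x hx ih => rw [smul_mul_assoc]; exact Submodule.smul_mem _ _ ih

lemma weyl_mem_WS (a : Weyl F) : a ∈ WS F := by
  obtain ⟨b, rfl⟩ := RingQuot.mkAlgHom_surjective F (WeylRel F) a
  have key : ∀ s ∈ WS F, s * (RingQuot.mkAlgHom F (WeylRel F) b) ∈ WS F := by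
    induction b with
    | grade0 r =>
      intro s hs
      rw [AlgHom.commutes, ← Algebra.commutes, ← Algebra.smul_def]
      exact Submodule.smul_mem _ _ hs
    | grade1 idx =>
      intro s hs
      fin_cases idx
      · exact WS_mul_X F hs
      · exact WS_mul_Y F hs
    | mul a b iha ihb =>
      intro s hs
      rw [map_mul, ← mul_assoc]
      exact ihb _ (iha s hs)
    | add a b iha ihb =>
      intro s hs
      rw [map_add, mul_add]
      exact add_mem (iha s hs) (ihb s hs)
  have h1 : (1 : Weyl F) ∈ WS F := by simpa [Wm] using Wm_mem_WS F 0 0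
  simpa using key 1 h1

/-! ### Ideals are stable under the commutator maps -/

lemma WadX_mem (I : TwoSidedIdeal (Weyl F)) {a : Weyl F} (ha : a ∈ I) : WadX F a ∈ I := by
  simpa [WadX, LinearMap.sub_apply, LinearMap.mulRight_apply, LinearMap.mulLeft_apply] using
    I.sub_mem (I.mul_mem_right a (Wx F) ha) (I.mul_mem_left (Wx F) a ha)

lemma WadY_mem (I : TwoSidedIdeal (Weyl F)) {a : Weyl F} (ha : a ∈ I) : WadY F a ∈ I := by
  simpa [WadY, LinearMap.sub_apply, LinearMap.mulRight_apply, LinearMap.mulLeft_apply] using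
    I.sub_mem (I.mul_mem_left (Wy F) a ha) (I.mul_mem_right a (Wy F) ha)

lemma WadX_pow_mem (I : TwoSidedIdeal (Weyl F)) (n : ℕ) {a : Weyl F} (ha : a ∈ I) :
    (WadX F ^ n) a ∈ I := by
  induction n with
  | zero => simpa
  | succ n ih => rw [pow_succ', Module.End.mul_apply]; exact WadX_mem F I ih

lemma WadY_pow_mem (I : TwoSidedIdeal (Weyl F)) (n : ℕ) {a : Weyl F} (ha : a ∈ I) :
    (WadY F ^ n) a ∈ I := by
  induction n with
  | zero => simpa
  | succ n ih => rw [pow_succ', Module.End.mul_apply]; exact WadY_mem F I ih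

/-! ### Characteristic zero implies simple -/

theorem weyl_simple_of_charZero [CharZero F] : IsSimpleRing (Weyl F) := by
  haveI : Nontrivial (Weyl F) := by
    refine ⟨1, 0, fun h => one_ne_zero (α := F) ?_⟩
    apply weyl_algebraMap_injective F
    simpa using h
  refine IsSimpleRing.of_eq_bot_or_eq_top ?_
  intro I
  rw [or_iff_not_imp_left, ← TwoSidedIdeal.one_mem_iff]
  intro hbot
  obtain ⟨a, haI, ha0⟩ : ∃ a, a ∈ I ∧ a ≠ 0 := by
    by_contra h
    push_neg at h
    refine hbot ?_
    rw [eq_bot_iff]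
    intro x hx
    exact h x hx
  have hspan := weyl_mem_WS F a
  rw [WS] at hspan
  obtain ⟨c, hc⟩ := Finsupp.mem_span_range_iff_exists_finsupp.mp hspan
  have hcne : c ≠ 0 := by
    rintro rfl
    simp only [Finsupp.sum_zero_index] at hc
    exact ha0 hc.symm
  obtain ⟨⟨i, j⟩, hij_mem, hmax⟩ := Finset.exists_max_image c.support (fun p => p.1 + p.2)
    (Finsupp.support_nonempty_iff.mpr hcne)
  set b := (WadY F ^ i) ((WadX F ^ j) a) with hb
  have hbI : b ∈ I := WadY_pow_mem F I i (WadX_pow_mem F I j haI)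
  have hterm : ∀ p : ℕ × ℕ, (WadY F ^ i) ((WadX F ^ j) (c p • Wm F p.1 p.2))
      = ((c p * (p.2.descFactorial j : F)) * (p.1.descFactorial i : F))
        • Wm F (p.1 - i) (p.2 - j) := by
    intro p
    rw [map_smul, WadX_pow_m, map_smul, map_nsmul, WadY_pow_m,
      ← Nat.cast_smul_eq_nsmul F, ← Nat.cast_smul_eq_nsmul F, smul_smul, smul_smul]
  have hbsum : b = ∑ p ∈ c.support,
      ((c p * (p.2.descFactorial j : F)) * (p.1.descFactorial i : F))
        • Wm F (p.1 - i) (p.2 - j) := by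
    rw [hb, ← hc, Finsupp.sum, map_sum, map_sum]
    exact Finset.sum_congr rfl fun p _ => hterm p
  have hsingle : b = ((c (i, j) * (j.descFactorial j : F)) * (i.descFactorial i : F))
      • Wm F (i - i) (j - j) := by
    rw [hbsum]
    exact Finset.sum_eq_single_of_mem (i, j) hij_mem (fun p hp hne => by
      rcases lt_or_ge p.2 j with h2 | h2
      · rw [Nat.descFactorial_eq_zero_iff_lt.mpr h2]
        simp
      rcases lt_or_ge p.1 i with h1 | h1
      · rw [Nat.descFactorial_eq_zero_iff_lt.mpr h1]
        simp
      have hle := hmax p hp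
      have hp1 : p.1 = i := by omega
      have hp2 : p.2 = j := by omega
      exact absurd (Prod.ext hp1 hp2) hne)
  have hb1 : b = (c (i, j) * ((j.factorial : F) * (i.factorial : F))) • (1 : Weyl F) := by
    rw [hsingle, Nat.sub_self, Nat.sub_self, Nat.descFactorial_self, Nat.descFactorial_self]
    have : Wm F 0 0 = 1 := by simp [Wm]
    rw [this, mul_assoc]
  set u : F := c (i, j) * ((j.factorial : F) * (i.factorial : F)) with hu_def
  have hu : u ≠ 0 := by
    refine mul_ne_zero (Finsupp.mem_support_iff.mp hij_mem) (mul_ne_zero ?_ ?_) <;>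
      exact Nat.cast_ne_zero.mpr (Nat.factorial_ne_zero _)
  have hbeq : b = algebraMap F (Weyl F) u := by
    rw [hb1, Algebra.algebraMap_eq_smul_one]
  have := I.mul_mem_left (algebraMap F (Weyl F) u⁻¹) b hbI
  rwa [hbeq, ← map_mul, inv_mul_cancel₀ hu, map_one] at this

/-- The Weyl algebra over F is a simple ring if and only if char F = 0. -/
theorem weyl_isSimpleRing_iff_charZero (F : Type) [Field F] :
    IsSimpleRing (Weyl F) ↔ CharZero F := by
  constructor
  · exact weyl_charZero_of_simple F
  · intro h
    exact weyl_simple_of_charZero F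
end

section
/- The minimal degree of a nonzero weak polynomial identity for the pair (A₁, V) is three: there exists a nonzero f ∈ F⟨X⟩ of degree 3 vanishing under all substitutions from V (e.g. St₃), and no nonzero f of degree ≤ 2 does. -/
/-!
For `a, b ∈ V` the commutator `[a, b]` is a scalar, hence central, so the double commutator
`[x₀, [x₁, x₂]]` is a nonzero weak identity of degree 3.

Conversely, let `f` of degree at most 2 vanish under all substitutions from `V`, and let `A₁` act
on `F[X]` by `x = X ·` and `y = d/dX`. Substituting `x` for `xᵢ` and `0` for the other variables,
the coefficient of `Xⁿ` in `f · 1` is the coefficient of the word `xᵢⁿ` in `f`. Substituting `y`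
for `xₐ` and `x` for `x_b` (`a ≠ b`), the constant term of `f · 1` is the coefficient of `xₐ x_b`
plus the constant term of `f`. So every coefficient of `f` vanishes.
-/

open FreeAlgebra Polynomial

instance FreeMonoid.decidableEq {α : Type*} [DecidableEq α] : DecidableEq (FreeMonoid α) :=
  inferInstanceAs (DecidableEq (List α))

theorem FreeMonoid.eq_one_or_eq_of_or_eq_of_mul_of {α : Type*} {m : FreeMonoid α}
    (hm : m.length ≤ 2) : m = 1 ∨ (∃ a, m = of a) ∨ ∃ a b, m = of a * of b := by
  obtain h | h | h : m.length = 0 ∨ m.length = 1 ∨ m.length = 2 := by omega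
  · exact .inl (length_eq_zero.mp h)
  · exact .inr (.inl (length_eq_one.mp h))
  · exact .inr (.inr (length_eq_two.mp h))

theorem List.prod_map_piSingle {ι M : Type*} [DecidableEq ι] [MonoidWithZero M] (i : ι) (a : M)
    (l : List ι) :
    (l.map (Pi.single i a)).prod = if l = List.replicate l.length i then a ^ l.length else 0 := by
  induction l with
  | nil => simp
  | cons k t ih =>
    by_cases hk : k = i
    · subst hk
      simp [ih, List.replicate_succ, pow_succ']
    · simp [hk, List.replicate_succ]

theorem Module.Basis.repr_add_mul_repr_eq_zero {ι R M : Type*} [CommSemiring R]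
    [AddCommMonoid M] [Module R M] [DecidableEq ι] (b : Module.Basis ι R M) (φ : M →ₗ[R] R)
    {s : Set ι} {f : M} (hs : ↑(b.repr f).support ⊆ s) (hf : φ f = 0) (i j : ι) (e : R)
    (hφ : ∀ k ∈ s, φ (b k) = (if k = i then 1 else 0) + (if k = j then e else 0)) :
    b.repr f i + e * b.repr f j = 0 := by
  have hsum : φ f = (b.repr f).sum fun k c => c * φ (b k) := by
    conv_lhs => rw [← b.linearCombination_repr f]
    rw [Finsupp.apply_linearCombination, Finsupp.linearCombination_apply]
    rfl
  rw [← hf, hsum, Finsupp.sum_congr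
    (g2 := fun k c => c * ((if k = i then 1 else 0) + if k = j then e else 0))
    fun k hk => by rw [hφ k (hs hk)]]
  simp only [mul_add, mul_ite, mul_one, mul_zero, Finsupp.sum_add, Finsupp.sum_ite_self_eq']
  rw [mul_comm e, ← Finsupp.sum_ite_self_eq' _ j, Finsupp.sum_mul]
  simp only [ite_mul, zero_mul]

namespace FreeAlgebra

variable {R X : Type*}

theorem basisFreeMonoid_ofList [CommSemiring R] (l : List X) :
    basisFreeMonoid R X (FreeMonoid.ofList l) = (l.map (ι R)).prod := by
  simp [basisFreeMonoid, equivMonoidAlgebraFreeMonoid]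

theorem support_repr_subset_of_mem_span_words [CommSemiring R] {k : ℕ} {f : FreeAlgebra R X}
    (hf : f ∈ Submodule.span R {w | ∃ l : List X, l.length ≤ k ∧ w = (l.map (ι R)).prod}) :
    ↑((basisFreeMonoid R X).repr f).support ⊆ {m : FreeMonoid X | m.length ≤ k} := by
  apply Module.Basis.repr_support_subset_of_mem_span
  convert hf
  ext w
  constructor
  · rintro ⟨m, hm, rfl⟩
    exact ⟨m.toList, hm, basisFreeMonoid_ofList m.toList⟩
  · rintro ⟨l, hl, rfl⟩
    exact ⟨FreeMonoid.ofList l, hl, basisFreeMonoid_ofList l⟩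

theorem lie_lie_ι_eq [CommRing R] (i j k : X) : (⁅ι R i, ⁅ι R j, ι R k⁆⁆ : FreeAlgebra R X) =
    ([i, j, k].map (ι R)).prod - ([i, k, j].map (ι R)).prod - ([j, k, i].map (ι R)).prod
      + ([k, j, i].map (ι R)).prod := by
  simp only [Ring.lie_def, List.map_cons, List.map_nil, List.prod_cons, List.prod_nil, mul_one]
  noncomm_ring

theorem lie_lie_ι_ne_zero [CommRing R] [Nontrivial R] {i j k : X} (hij : i ≠ j) (hik : i ≠ k)
    (hjk : j ≠ k) : (⁅ι R i, ⁅ι R j, ι R k⁆⁆ : FreeAlgebra R X) ≠ 0 := by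
  classical
  intro h
  have := congr_arg (fun f => (basisFreeMonoid R X).repr f (.ofList [i, j, k])) h
  simp only [lie_lie_ι_eq, ← basisFreeMonoid_ofList, map_add, map_sub,
    Module.Basis.repr_self] at this
  simp [← FreeMonoid.toList.injective.eq_iff, hij, hik, hjk] at this

end FreeAlgebra

namespace Weyl

variable (F : Type) [Field F]

theorem y_mul_x : Wy F * Wx F = Wx F * Wy F + 1 := by
  simpa [Wx, Wy] using RingQuot.mkAlgHom_rel F (WeylRel.rel (F := F))

theorem Wx_mem_WV : Wx F ∈ WV F := Submodule.subset_span (by simp)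

theorem Wy_mem_WV : Wy F ∈ WV F := Submodule.subset_span (by simp)

variable {F} in
theorem exists_lie_eq_algebraMap {a b : Weyl F} (ha : a ∈ WV F) (hb : b ∈ WV F) :
    ∃ c : F, ⁅a, b⁆ = algebraMap F (Weyl F) c := by
  obtain ⟨a₁, a₂, rfl⟩ := Submodule.mem_span_pair.mp ha
  obtain ⟨b₁, b₂, rfl⟩ := Submodule.mem_span_pair.mp hb
  refine ⟨a₂ * b₁ - a₁ * b₂, ?_⟩
  simp only [Ring.lie_def, add_mul, mul_add, smul_mul_assoc, mul_smul_comm, y_mul_x,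
    Algebra.algebraMap_eq_smul_one]
  module

noncomputable def polyRep : Weyl F →ₐ[F] Module.End F F[X] :=
  RingQuot.liftAlgHom F ⟨FreeAlgebra.lift F ![LinearMap.mulLeft F X, derivative], by
    rintro _ _ ⟨⟩
    refine LinearMap.ext fun p => ?_
    simp [derivative_mul]
    ring⟩

theorem polyRep_Wx : polyRep F (Wx F) = LinearMap.mulLeft F X := by
  simp [polyRep, Wx]

theorem polyRep_Wx_apply (p : F[X]) : polyRep F (Wx F) p = X * p := by
  simp [polyRep_Wx]

theorem polyRep_Wy_apply (p : F[X]) : polyRep F (Wy F) p = derivative p := by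
  simp [polyRep, Wy]

def IsWeakIdentity (f : FreeAlgebra F ℕ) : Prop :=
  ∀ u : ℕ → Weyl F, (∀ i, u i ∈ WV F) → FreeAlgebra.lift F u f = 0

theorem isWeakIdentity_lie_lie (i j k : ℕ) : IsWeakIdentity F ⁅ι F i, ⁅ι F j, ι F k⁆⁆ := by
  intro u hu
  obtain ⟨c, hc⟩ := exists_lie_eq_algebraMap (hu j) (hu k)
  simp only [Ring.lie_def, map_sub, map_mul, lift_ι_apply]
  rw [← Ring.lie_def (u j), hc, Algebra.commutes, sub_self]

noncomputable def coeffEval (u : ℕ → Weyl F) (n : ℕ) : FreeAlgebra F ℕ →ₗ[F] F :=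
  lcoeff F n ∘ₗ LinearMap.applyₗ 1 ∘ₗ (polyRep F).toLinearMap ∘ₗ (FreeAlgebra.lift F u).toLinearMap

variable {F} in
theorem IsWeakIdentity.coeffEval_eq_zero {f : FreeAlgebra F ℕ} (hf : IsWeakIdentity F f)
    {u : ℕ → Weyl F} (hu : ∀ i, u i ∈ WV F) (n : ℕ) : coeffEval F u n f = 0 := by
  simp [coeffEval, hf u hu]

theorem coeffEval_basisFreeMonoid (u : ℕ → Weyl F) (n : ℕ) (m : FreeMonoid ℕ) :
    coeffEval F u n (basisFreeMonoid F ℕ m) = (polyRep F (m.toList.map u).prod 1).coeff n := by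
  rw [← FreeMonoid.ofList_toList m, basisFreeMonoid_ofList]
  simp [coeffEval, map_list_prod]

theorem piSingle_Wx_mem_WV (k i : ℕ) : (Pi.single k (Wx F) : ℕ → Weyl F) i ∈ WV F := by
  rw [Pi.single_apply]
  split_ifs
  exacts [Wx_mem_WV F, (WV F).zero_mem]

theorem coeffEval_piSingle_Wx (i n : ℕ) (m : FreeMonoid ℕ) :
    coeffEval F (Pi.single i (Wx F)) n (basisFreeMonoid F ℕ m) =
      if m = FreeMonoid.ofList (List.replicate n i) then 1 else 0 := by
  rw [coeffEval_basisFreeMonoid, List.prod_map_piSingle]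
  by_cases hm : m.toList = List.replicate m.toList.length i
  · rw [if_pos hm, map_pow, polyRep_Wx, LinearMap.pow_mulLeft, LinearMap.mulLeft_apply, mul_one,
      coeff_X_pow]
    refine if_congr (⟨?_, ?_⟩ : n = _ ↔ _) rfl rfl
    · rintro rfl
      exact hm
    · rintro rfl
      simp
  · rw [if_neg hm, map_zero, LinearMap.zero_apply, coeff_zero, if_neg]
    rintro rfl
    simp at hm

noncomputable def yxSubst (a b k : ℕ) : Weyl F :=
  if k = a then Wy F else if k = b then Wx F else 0

theorem yxSubst_mem_WV (a b k : ℕ) : yxSubst F a b k ∈ WV F := by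
  unfold yxSubst
  split_ifs
  exacts [Wy_mem_WV F, Wx_mem_WV F, (WV F).zero_mem]

variable {F} {a b : ℕ}

theorem polyRep_yxSubst_apply_one (hab : a ≠ b) (k : ℕ) :
    polyRep F (yxSubst F a b k) 1 = if k = b then X else 0 := by
  unfold yxSubst
  obtain rfl | hka := eq_or_ne k a
  · simp [polyRep_Wy_apply, hab]
  · by_cases hkb : k = b
    · subst hkb
      simp [hka, polyRep_Wx_apply]
    · simp [hka, hkb]

theorem coeff_zero_polyRep_yxSubst_apply (k : ℕ) (p : F[X]) :
    (polyRep F (yxSubst F a b k) p).coeff 0 = if k = a then p.coeff 1 else 0 := by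
  unfold yxSubst
  obtain rfl | hka := eq_or_ne k a
  · simp [polyRep_Wy_apply, coeff_derivative]
  · by_cases hkb : k = b
    · subst hkb
      simp [hka, polyRep_Wx_apply]
    · simp [hka, hkb]

theorem coeffEval_yxSubst (hab : a ≠ b) {m : FreeMonoid ℕ} (hm : m.length ≤ 2) :
    coeffEval F (yxSubst F a b) 0 (basisFreeMonoid F ℕ m) =
      (if m = .of a * .of b then 1 else 0) + (if m = 1 then 1 else 0) := by
  rw [coeffEval_basisFreeMonoid]
  obtain rfl | ⟨k, rfl⟩ | ⟨k, l, rfl⟩ := FreeMonoid.eq_one_or_eq_of_or_eq_of_mul_of hm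
  · simp [← FreeMonoid.toList.injective.eq_iff]
  · simp [polyRep_yxSubst_apply_one hab, ← FreeMonoid.toList.injective.eq_iff]
    split_ifs <;> simp
  · simp [polyRep_yxSubst_apply_one hab, coeff_zero_polyRep_yxSubst_apply,
      ← FreeMonoid.toList.injective.eq_iff]
    split_ifs <;> simp_all

theorem repr_eq_zero_of_isWeakIdentity {f : FreeAlgebra F ℕ}
    (hdeg : ↑((basisFreeMonoid F ℕ).repr f).support ⊆ {m : FreeMonoid ℕ | m.length ≤ 2})
    (hf : IsWeakIdentity F f) : (basisFreeMonoid F ℕ).repr f = 0 := by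
  set c := (basisFreeMonoid F ℕ).repr f with hc
  have hpow : ∀ n k, c (.ofList (.replicate n k)) = 0 := fun n k => by
    simpa using (basisFreeMonoid F ℕ).repr_add_mul_repr_eq_zero
      (coeffEval F (Pi.single k (Wx F)) n) hdeg
      (hf.coeffEval_eq_zero (piSingle_Wx_mem_WV F k) n) _ 1 0
      fun m _ => by simp [coeffEval_piSingle_Wx]
  have hpair : ∀ k l, k ≠ l → c (.of k * .of l) = 0 := fun k l hkl => by
    have := (basisFreeMonoid F ℕ).repr_add_mul_repr_eq_zero (coeffEval F (yxSubst F k l) 0) hdeg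
      (hf.coeffEval_eq_zero (yxSubst_mem_WV F k l) 0) _ 1 1 fun m hm => coeffEval_yxSubst hkl hm
    rwa [← hc, show c 1 = 0 from hpow 0 0, mul_zero, add_zero] at this
  ext m
  by_cases hm : m ∈ c.support
  · obtain rfl | ⟨k, rfl⟩ | ⟨k, l, rfl⟩ := FreeMonoid.eq_one_or_eq_of_or_eq_of_mul_of (hdeg hm)
    · exact hpow 0 0
    · exact hpow 1 k
    · obtain rfl | hkl := eq_or_ne k l
      · exact hpow 2 k
      · exact hpair k l hkl
  · exact Finsupp.notMem_support_iff.mp hm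

end Weyl

theorem weyl_minimal_weak_identity_degree_three_general (F : Type) [Field F] :
    (∃ f : FreeAlgebra F ℕ,
      f ∈ Submodule.span F {w : FreeAlgebra F ℕ |
        ∃ l : List ℕ, l.length ≤ 3 ∧ w = (l.map (FreeAlgebra.ι F)).prod} ∧
      f ≠ 0 ∧
      ∀ u : ℕ → Weyl F, (∀ i, u i ∈ WV F) → FreeAlgebra.lift F u f = 0) ∧
    (∀ f : FreeAlgebra F ℕ,
      f ∈ Submodule.span F {w : FreeAlgebra F ℕ |
        ∃ l : List ℕ, l.length ≤ 2 ∧ w = (l.map (FreeAlgebra.ι F)).prod} →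
      (∀ u : ℕ → Weyl F, (∀ i, u i ∈ WV F) → FreeAlgebra.lift F u f = 0) →
      f = 0) := by
  refine ⟨⟨⁅ι F 0, ⁅ι F 1, ι F 2⁆⁆, ?_, lie_lie_ι_ne_zero (by decide) (by decide) (by decide),
    Weyl.isWeakIdentity_lie_lie F 0 1 2⟩, fun f hf hid => ?_⟩
  · rw [lie_lie_ι_eq]
    refine add_mem (sub_mem (sub_mem ?_ ?_) ?_) ?_ <;>
      exact Submodule.subset_span ⟨_, by simp, rfl⟩
  · exact (basisFreeMonoid F ℕ).repr.map_eq_zero_iff.mp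
      (Weyl.repr_eq_zero_of_isWeakIdentity (support_repr_subset_of_mem_span_words hf) hid)

/-- The minimal degree of a nonzero weak polynomial identity for (A₁, V) is three:
there is a nonzero identity of degree ≤ 3 (lying in the span of words of length ≤ 3),
and every identity of degree ≤ 2 is zero. -/
theorem weyl_minimal_weak_identity_degree_three (F : Type) [Field F] [Infinite F] :
    (∃ f : FreeAlgebra F ℕ,
      f ∈ Submodule.span F {w : FreeAlgebra F ℕ |
        ∃ l : List ℕ, l.length ≤ 3 ∧ w = (l.map (FreeAlgebra.ι F)).prod} ∧
      f ≠ 0 ∧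
      ∀ u : ℕ → Weyl F, (∀ i, u i ∈ WV F) → FreeAlgebra.lift F u f = 0) ∧
    (∀ f : FreeAlgebra F ℕ,
      f ∈ Submodule.span F {w : FreeAlgebra F ℕ |
        ∃ l : List ℕ, l.length ≤ 2 ∧ w = (l.map (FreeAlgebra.ι F)).prod} →
      (∀ u : ℕ → Weyl F, (∀ i, u i ∈ WV F) → FreeAlgebra.lift F u f = 0) →
      f = 0) :=
  weyl_minimal_weak_identity_degree_three_general F
end
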